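/- Let H be a complex Hilbert space and W an isometry on H. Then there exist isometries U and V on K = lp (fun _ : List (Fin d) => H) 2 such that for every σ ∈ List (Fin d) and h ∈ H: U(single σ h) = single (act 1 σ) (W^{carry 1 σ} h) and V(single σ h) = single (0 :: σ) h. -/

import Mathlib

/-!
Both operators are built from two kinds of isometries of `ℓ²(List (Fin d), H)`: applying an
isometry of `H` in each coordinate, and extending by zero along an injective reindexing of the
coordinates, which leaves the family of norms unchanged up to zeros. `V` reindexes along
`σ ↦ 0 :: σ`; `U` applies `W ^ carry c 1 σ` at `σ` and then reindexes along `act c 1`. The map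
`act c m` is injective: the leading digits `(m + i) mod d` and `(m + j) mod d` of two equal
outputs force `i = j`, hence equal carries into the tails. An isometry `T` satisfies `T† T = 1`.
-/

open scoped Classical ENNReal

namespace BSpaper

/-- `act m σ`: the result of pulling `b^m` through the stem with digit string `σ`
in `BS(c,d)` (acting on the digits). -/
def act (c : ℕ) {d : ℕ} : ℕ → List (Fin d) → List (Fin d)
  | _, [] => []
  | m, i :: σ => ⟨(m + (i : ℕ)) % d, Nat.mod_lt _ i.pos⟩ :: act c (c * ((m + (i : ℕ)) / d)) σ

/-- `carry m σ`: the power of `b` emerging on the right when `b^m` is pulled through the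
stem with digit string `σ`. -/
def carry (c : ℕ) {d : ℕ} : ℕ → List (Fin d) → ℕ
  | m, [] => m
  | m, i :: σ => carry c (c * ((m + (i : ℕ)) / d)) σ

open Function

theorem act_injective (c : ℕ) {d : ℕ} (m : ℕ) :
    Injective (act c m : List (Fin d) → List (Fin d)) := by
  intro σ τ h
  induction σ generalizing m τ with
  | nil => cases τ <;> simp_all [act]
  | cons i σ ih =>
    cases τ with
    | nil => simp [act] at h
    | cons j τ =>
      simp only [act, List.cons.injEq, Fin.mk.injEq] at h
      obtain ⟨hdigit, hrest⟩ := h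
      have hij : i = j :=
        Fin.ext ((Nat.ModEq.add_left_cancel' m hdigit).eq_of_lt_of_lt i.isLt j.isLt)
      subst hij
      rw [ih _ hrest]

end BSpaper

namespace Function

variable {ι κ E : Type*} {f : ι → κ}

theorem norm_rpow_extend_zero [NormedAddCommGroup E] (g : ι → E) {r : ℝ} (hr : r ≠ 0) :
    (fun k => ‖extend f g 0 k‖ ^ r) = extend f (fun i => ‖g i‖ ^ r) 0 := by
  funext k
  rw [apply_extend (fun v : E => ‖v‖ ^ r)]
  congr 1
  funext k
  simp [Real.zero_rpow hr]

theorem extend_zero_single [Zero E] [DecidableEq ι] [DecidableEq κ] (hf : Injective f)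
    (i : ι) (v : E) : extend f (Pi.single i v) (0 : κ → E) = Pi.single (f i) v := by
  funext k
  by_cases hk : ∃ j, f j = k
  · obtain ⟨j, rfl⟩ := hk
    simp only [hf.extend_apply, Pi.single_apply, hf.eq_iff]
  · rw [extend_apply' _ _ _ hk, Pi.single_eq_of_ne (fun h => hk ⟨i, h.symm⟩), Pi.zero_apply]

end Function

namespace lp

open Function

variable {𝕜 ι κ : Type*} [NormedRing 𝕜] {p : ℝ≥0∞}

section Fiberwise

variable {E F : ι → Type*} [∀ i, NormedAddCommGroup (E i)] [∀ i, NormedAddCommGroup (F i)]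
  [∀ i, Module 𝕜 (E i)] [∀ i, Module 𝕜 (F i)]
  [∀ i, IsBoundedSMul 𝕜 (E i)] [∀ i, IsBoundedSMul 𝕜 (F i)] [Fact (1 ≤ p)]

noncomputable def mapₗᵢ (T : ∀ i, E i →ₗᵢ[𝕜] F i) : lp E p →ₗᵢ[𝕜] lp F p where
  toFun x := ⟨fun i => T i (x i),
    memℓp_norm_iff.1 (by simpa only [LinearIsometry.norm_map] using (lp.memℓp x).norm)⟩
  map_add' x y := lp.ext <| funext fun i => (T i).map_add (x i) (y i)
  map_smul' a x := lp.ext <| funext fun i => (T i).map_smul a (x i)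
  norm_map' x := by
    have hp : p ≠ 0 := (zero_lt_one.trans_le Fact.out).ne'
    exact le_antisymm (norm_mono hp fun i => ((T i).norm_map (x i)).le)
      (norm_mono hp fun i => ((T i).norm_map (x i)).ge)

@[simp]
theorem mapₗᵢ_single [DecidableEq ι] (T : ∀ i, E i →ₗᵢ[𝕜] F i) (i : ι) (v : E i) :
    mapₗᵢ (p := p) T (lp.single p i v) = lp.single p i (T i v) :=
  lp.ext <| funext fun j => Pi.apply_single (fun j => T j) (fun j => (T j).map_zero) i v j

end Fiberwise

section ExtendZero

variable {E : Type*} [NormedAddCommGroup E] [Module 𝕜 E] [IsBoundedSMul 𝕜 E]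
  {f : ι → κ}

theorem _root_.Memℓp.extend_zero (hf : Injective f) (hp : 0 < p.toReal) {g : ι → E}
    (hg : Memℓp g p) : Memℓp (extend f g 0 : κ → E) p := by
  rw [memℓp_gen_iff hp, norm_rpow_extend_zero g hp.ne']
  exact (summable_extend_zero hf).2 ((memℓp_gen_iff hp).1 hg)

theorem norm_eq_of_coe_eq_extend_zero (hf : Injective f) (hp : 0 < p.toReal)
    {x : lp (fun _ : ι => E) p} {y : lp (fun _ : κ => E) p} (hy : ⇑y = extend f x 0) :
    ‖y‖ = ‖x‖ := by
  rw [norm_eq_tsum_rpow hp, norm_eq_tsum_rpow hp, hy, norm_rpow_extend_zero _ hp.ne',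
    tsum_extend_zero hf]

variable [Fact (1 ≤ p)]

noncomputable def extendZeroₗᵢ (hf : Injective f) (hp : 0 < p.toReal) :
    lp (fun _ : ι => E) p →ₗᵢ[𝕜] lp (fun _ : κ => E) p where
  toFun x := ⟨extend f x 0, (lp.memℓp x).extend_zero hf hp⟩
  map_add' x y := lp.ext <| by
    change extend f ⇑(x + y) 0 = extend f x 0 + extend f y 0
    rw [lp.coeFn_add, ← extend_add, add_zero]
  map_smul' a x := lp.ext <| by
    change extend f ⇑(a • x) 0 = a • extend f x 0
    rw [lp.coeFn_smul, ← extend_smul, smul_zero]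
  norm_map' x := norm_eq_of_coe_eq_extend_zero hf hp rfl

@[simp]
theorem extendZeroₗᵢ_single [DecidableEq ι] [DecidableEq κ] (hf : Injective f)
    (hp : 0 < p.toReal) (i : ι) (v : E) :
    extendZeroₗᵢ (𝕜 := 𝕜) hf hp (lp.single p i v) = lp.single p (f i) v :=
  lp.ext <| by
    change extend f ⇑(lp.single p i v) 0 = _
    rw [lp.coeFn_single, lp.coeFn_single, extend_zero_single hf]

end ExtendZero

end lp

namespace BSpaper

open ContinuousLinearMap in
theorem statement14_general (c d : ℕ) (hd : 0 < d)
    {H : Type*} [NormedAddCommGroup H] [InnerProductSpace ℂ H] [CompleteSpace H]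
    (W : H →L[ℂ] H) (hW : adjoint W * W = 1) :
    ∃ U V : lp (fun _ : List (Fin d) => H) 2 →L[ℂ] lp (fun _ : List (Fin d) => H) 2,
      adjoint U * U = 1 ∧ adjoint V * V = 1 ∧
      (∀ (σ : List (Fin d)) (h : H),
        U (lp.single 2 σ h) = lp.single 2 (act c 1 σ) ((W ^ carry c 1 σ) h)) ∧
      (∀ (σ : List (Fin d)) (h : H),
        V (lp.single 2 σ h) = lp.single 2 ((⟨0, hd⟩ : Fin d) :: σ) h) := by
  have hp : 0 < (2 : ℝ≥0∞).toReal := by norm_num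
  let Wᵢ : H →ₗᵢ[ℂ] H := ⟨W, W.norm_map_iff_adjoint_comp_self.mpr hW⟩
  let U := (lp.extendZeroₗᵢ (act_injective (d := d) c 1) hp).comp
    (lp.mapₗᵢ (p := 2) fun σ => Wᵢ ^ carry c 1 σ)
  let V := lp.extendZeroₗᵢ (𝕜 := ℂ) (E := H) (List.cons_injective (a := (⟨0, hd⟩ : Fin d))) hp
  refine ⟨U.toContinuousLinearMap, V.toContinuousLinearMap, U.adjoint_comp_self,
    V.adjoint_comp_self, fun σ h => ?_, fun σ h => ?_⟩
  · simp [U, Wᵢ, LinearIsometry.coe_pow]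
  · exact lp.extendZeroₗᵢ_single List.cons_injective hp σ h

open ContinuousLinearMap in
/-- Given a Hilbert space H and an isometry W on H, there exist isometries U and V on
K = lp (fun _ : List (Fin d) => H) 2 such that for every σ and h:
U (single σ h) = single (act 1 σ) (W^(carry 1 σ) h) and V (single σ h) = single (0 :: σ) h. -/
theorem statement14 (c d : ℕ) (hc : 0 < c) (hd : 0 < d)
    {H : Type*} [NormedAddCommGroup H] [InnerProductSpace ℂ H] [CompleteSpace H]
    (W : H →L[ℂ] H) (hW : adjoint W * W = 1) :
    ∃ U V : lp (fun _ : List (Fin d) => H) 2 →L[ℂ] lp (fun _ : List (Fin d) => H) 2,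
      adjoint U * U = 1 ∧ adjoint V * V = 1 ∧
      (∀ (σ : List (Fin d)) (h : H),
        U (lp.single 2 σ h) = lp.single 2 (act c 1 σ) ((W ^ carry c 1 σ) h)) ∧
      (∀ (σ : List (Fin d)) (h : H),
        V (lp.single 2 σ h) = lp.single 2 ((⟨0, hd⟩ : Fin d) :: σ) h) :=
  statement14_general c d hd W hW

end BSpaper
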